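/- Let m ≥ 1, let V be a symmetric positive definite n×n real matrix, and let A₁, …, A_m be symmetric n×n real matrices; define the m×m matrices g and E by g_{μν} = (1/2) tr(V⁻¹ A_μ V⁻¹ A_ν) and E_{μν} = (1/2) tr(A_μ A_ν). Then the regularized volume element satisfies Υ(V) · √(det g) ≤ √(det E) · exp(−tr(adj(V))) · (λ_max(adj(V)))^m · log(1 + (det V)^m)/(det V)^m, and consequently Υ(V) · √(det g) ≤ √(det E) · m^m · e^{−m}, where Υ(V) = exp(−tr(adj(V))) · log(1 + (det V)^m), adj(V) = det(V)·V⁻¹ is the adjugate of V and λ_max denotes the largest eigenvalue. In particular the regularized volume element is uniformly bounded on any set of parameters where V is positive definite. -/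

import Mathlib

/-!
Put `c = λ_max(adj V) / det V`, so that `V⁻¹ ≤ c • 1` in the Loewner order. The quadratic form of
the Gram matrix `(½ tr (B A_μ B A_ν))_{μν}` at `x` is `½ tr (B Y B Y)` with `Y = ∑ x_μ A_μ`, and
`tr (B Y B Y) = tr ((Y B Y) B)` is monotone in `B ≥ 0` because `Y B Y ≥ 0`. Hence `0 ≤ g ≤ c² E`,
and monotonicity of the determinant on positive semidefinite matrices gives
`√(det g) ≤ c ^ m √(det E)`, which is the first inequality. The second follows from
`λ_max(adj V) ≤ tr (adj V) = t`, `log (1 + x) ≤ x` and `t ^ m e^{-t} ≤ m ^ m e^{-m}`.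
-/

open Matrix

/-- Largest eigenvalue of a matrix, as the supremum of its real spectrum. -/
noncomputable def lamMax {n : ℕ} (W : Matrix (Fin n) (Fin n) ℝ) : ℝ :=
  sSup (spectrum ℝ W)

open scoped MatrixOrder

namespace Matrix

variable {ι κ : Type*} [Fintype ι] [DecidableEq ι] [Fintype κ]

lemma le_of_dotProduct_mulVec_le {M N : Matrix κ κ ℝ} (hM : M.IsHermitian) (hN : N.IsHermitian)
    (h : ∀ x, x ⬝ᵥ M *ᵥ x ≤ x ⬝ᵥ N *ᵥ x) : M ≤ N :=
  le_iff.mpr <| .of_dotProduct_mulVec_nonneg (hN.sub hM) fun x => by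
    simpa [sub_mulVec, dotProduct_sub] using h x

lemma trace_mul_nonneg {P Q : Matrix ι ι ℝ} (hP : 0 ≤ P) (hQ : 0 ≤ Q) : 0 ≤ (P * Q).trace := by
  set S := CFC.sqrt P
  have hS : IsSelfAdjoint S := (CFC.sqrt_nonneg P).isSelfAdjoint
  have : (P * Q).trace = (S * Q * S).trace := by
    rw [← CFC.sqrt_mul_sqrt_self P hP, trace_mul_cycle, trace_mul_comm, Matrix.mul_assoc]
  rw [this]
  exact (nonneg_iff_posSemidef.mp (hS.conjugate_nonneg hQ)).trace_nonneg

lemma trace_mul_le_trace_mul {P Q R : Matrix ι ι ℝ} (hP : 0 ≤ P) (hQR : Q ≤ R) :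
    (P * Q).trace ≤ (P * R).trace := by
  have := trace_mul_nonneg hP (sub_nonneg.mpr hQR)
  rwa [Matrix.mul_sub, trace_sub, sub_nonneg] at this

lemma trace_mul_mul_mul_le_of_le {B B' Y : Matrix ι ι ℝ} (hY : Y.IsHermitian) (hB : 0 ≤ B)
    (hBB' : B ≤ B') : (B * Y * B * Y).trace ≤ (B' * Y * B' * Y).trace := by
  have hY' : IsSelfAdjoint Y := hY
  have cyc : ∀ C D : Matrix ι ι ℝ, (C * Y * D * Y).trace = (Y * D * Y * C).trace := fun C D => by
    rw [show C * Y * D * Y = C * (Y * D * Y) by simp only [Matrix.mul_assoc], trace_mul_comm]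
  calc (B * Y * B * Y).trace = (Y * B * Y * B).trace := cyc B B
    _ ≤ (Y * B * Y * B').trace := trace_mul_le_trace_mul (hY'.conjugate_nonneg hB) hBB'
    _ = (Y * B' * Y * B).trace := by
        rw [← cyc B' B, ← cyc B B', Matrix.mul_assoc (B' * Y), trace_mul_comm]
        simp only [Matrix.mul_assoc]
    _ ≤ (Y * B' * Y * B').trace :=
        trace_mul_le_trace_mul (hY'.conjugate_nonneg (hB.trans hBB')) hBB'
    _ = (B' * Y * B' * Y).trace := (cyc B' B').symm

lemma det_le_one_of_le_one {M : Matrix ι ι ℝ} (h0 : 0 ≤ M) (h1 : M ≤ 1) : M.det ≤ 1 := by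
  have hM := nonneg_iff_posSemidef.mp h0
  have hspec : ∀ x ∈ spectrum ℝ M, x ≤ 1 :=
    (le_algebraMap_iff_spectrum_le hM.isHermitian.isSelfAdjoint).mp (by simpa using h1)
  rw [hM.isHermitian.det_eq_prod_eigenvalues]
  exact Finset.prod_le_one (fun i _ => hM.eigenvalues_nonneg i)
    fun i _ => hspec _ (hM.isHermitian.eigenvalues_mem_spectrum_real i)

lemma det_eq_zero_of_le_of_det_eq_zero {A B : Matrix ι ι ℝ} (hA : 0 ≤ A) (hAB : A ≤ B)
    (hB : B.det = 0) : A.det = 0 := by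
  obtain ⟨x, hx, hBx⟩ := exists_mulVec_eq_zero_iff.mpr hB
  have hA' := nonneg_iff_posSemidef.mp hA
  have hle : x ⬝ᵥ A *ᵥ x ≤ 0 := by
    simpa [sub_mulVec, dotProduct_sub, hBx] using (le_iff.mp hAB).dotProduct_mulVec_nonneg x
  have hAx : A *ᵥ x = 0 := (hA'.dotProduct_mulVec_zero_iff x).mp <|
    le_antisymm (by simpa using hle) (hA'.dotProduct_mulVec_nonneg x)
  exact exists_mulVec_eq_zero_iff.mp ⟨x, hx, hAx⟩

lemma det_le_det_of_le {A B : Matrix ι ι ℝ} (hA : 0 ≤ A) (hAB : A ≤ B) : A.det ≤ B.det := by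
  by_cases hB : B.det = 0
  · rw [det_eq_zero_of_le_of_det_eq_zero hA hAB hB, hB]
  have hB0 : 0 ≤ B := hA.trans hAB
  set S := CFC.sqrt B
  have hSS : S * S = B := CFC.sqrt_mul_sqrt_self B hB0
  have hS : IsUnit S.det := isUnit_iff_ne_zero.mpr fun h => hB (by rw [← hSS, det_mul, h, zero_mul])
  have hSinv : IsSelfAdjoint S⁻¹ := IsHermitian.inv (CFC.sqrt_nonneg B).isSelfAdjoint
  -- conjugating by `S⁻¹ = (√B)⁻¹` reduces the claim to `B = 1`
  set M := S⁻¹ * A * S⁻¹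
  have hM1 : M ≤ 1 := calc
    M ≤ S⁻¹ * B * S⁻¹ := hSinv.conjugate_le_conjugate hAB
    _ = 1 := by rw [← hSS, Matrix.mul_assoc, Matrix.mul_assoc, mul_nonsing_inv _ hS, Matrix.mul_one,
      nonsing_inv_mul _ hS]
  have hAM : A = S * M * S := by
    simp only [M, ← Matrix.mul_assoc, mul_nonsing_inv _ hS, Matrix.one_mul]
    rw [Matrix.mul_assoc, nonsing_inv_mul _ hS, Matrix.mul_one]
  calc A.det = M.det * B.det := by rw [hAM, ← hSS]; simp only [det_mul]; ring
    _ ≤ 1 * B.det := mul_le_mul_of_nonneg_right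
        (det_le_one_of_le_one (hSinv.conjugate_nonneg hA) hM1)
        (nonneg_iff_posSemidef.mp hB0).det_nonneg
    _ = B.det := one_mul _

end Matrix

section Fisher

variable {ι κ : Type*} [Fintype ι]

/-- `fisherMatrix V⁻¹ A` is the Fisher information `g` of the Gaussian family with covariance `V`
and tangent directions `A μ`; `fisherMatrix 1 A` is the matrix `E`. -/
noncomputable def fisherMatrix (B : Matrix ι ι ℝ) (A : κ → Matrix ι ι ℝ) : Matrix κ κ ℝ :=
  of fun μ ν => (1/2) * (B * A μ * B * A ν).trace

lemma fisherMatrix_one [DecidableEq ι] (A : κ → Matrix ι ι ℝ) :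
    fisherMatrix 1 A = of fun μ ν => (1/2) * (A μ * A ν).trace := by
  simp [fisherMatrix]

lemma fisherMatrix_smul_one [DecidableEq ι] (c : ℝ) (A : κ → Matrix ι ι ℝ) :
    fisherMatrix (c • 1) A = c ^ 2 • fisherMatrix 1 A := by
  ext μ ν
  simp [fisherMatrix, trace_smul]
  ring

lemma fisherMatrix_isHermitian (B : Matrix ι ι ℝ) (A : κ → Matrix ι ι ℝ) :
    (fisherMatrix B A).IsHermitian := by
  ext μ ν
  simp only [conjTranspose_apply, star_trivial, fisherMatrix, of_apply]
  rw [Matrix.mul_assoc (B * A ν), trace_mul_comm, ← Matrix.mul_assoc]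

lemma dotProduct_fisherMatrix_mulVec [Fintype κ] (B : Matrix ι ι ℝ) (A : κ → Matrix ι ι ℝ)
    (x : κ → ℝ) :
    x ⬝ᵥ fisherMatrix B A *ᵥ x =
      (1/2) * (B * (∑ μ, x μ • A μ) * B * (∑ μ, x μ • A μ)).trace := by
  simp only [dotProduct, mulVec, fisherMatrix, of_apply, Matrix.sum_mul,
    trace_sum, Matrix.mul_smul, Matrix.smul_mul, trace_smul, smul_eq_mul, Finset.mul_sum]
  rw [Finset.sum_comm]
  refine Finset.sum_congr rfl fun μ _ => Finset.sum_congr rfl fun ν _ => ?_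
  ring

lemma fisherMatrix_mono [DecidableEq ι] [Fintype κ] {B B' : Matrix ι ι ℝ} (hB : 0 ≤ B)
    (hBB' : B ≤ B') {A : κ → Matrix ι ι ℝ} (hA : ∀ μ, (A μ).IsHermitian) :
    fisherMatrix B A ≤ fisherMatrix B' A := by
  refine le_of_dotProduct_mulVec_le (fisherMatrix_isHermitian B A) (fisherMatrix_isHermitian B' A)
    fun x => ?_
  have hY : (∑ μ, x μ • A μ).IsHermitian :=
    isSelfAdjoint_sum _ fun μ _ => (hA μ).smul (IsSelfAdjoint.all (x μ))
  simp only [dotProduct_fisherMatrix_mulVec]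
  gcongr
  exact trace_mul_mul_mul_le_of_le hY hB hBB'

lemma fisherMatrix_nonneg [DecidableEq ι] [Fintype κ] {B : Matrix ι ι ℝ} (hB : 0 ≤ B)
    {A : κ → Matrix ι ι ℝ} (hA : ∀ μ, (A μ).IsHermitian) : 0 ≤ fisherMatrix B A := by
  have h0 : fisherMatrix 0 A = 0 := by ext; simp [fisherMatrix]
  simpa only [h0] using fisherMatrix_mono le_rfl hB hA

lemma sqrt_det_fisherMatrix_le [DecidableEq ι] [Fintype κ] [DecidableEq κ] {B : Matrix ι ι ℝ}
    (hB : 0 ≤ B) {c : ℝ} (hc : 0 ≤ c) (hBc : B ≤ c • 1) {A : κ → Matrix ι ι ℝ}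
    (hA : ∀ μ, (A μ).IsHermitian) :
    √(fisherMatrix B A).det ≤ c ^ Fintype.card κ * √(fisherMatrix 1 A).det := by
  have hdet := det_le_det_of_le (fisherMatrix_nonneg hB hA) (fisherMatrix_mono hB hBc hA)
  rw [fisherMatrix_smul_one, det_smul, ← pow_mul, pow_mul'] at hdet
  calc √(fisherMatrix B A).det ≤ √((c ^ Fintype.card κ) ^ 2 * (fisherMatrix 1 A).det) :=
        Real.sqrt_le_sqrt hdet
    _ = c ^ Fintype.card κ * √(fisherMatrix 1 A).det := by
        rw [Real.sqrt_mul (by positivity), Real.sqrt_sq (by positivity)]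

end Fisher

section LamMax

variable {n : ℕ} {W : Matrix (Fin n) (Fin n) ℝ}

lemma le_lamMax_smul_one (hW : W.IsHermitian) : W ≤ lamMax W • 1 := by
  rw [← Algebra.algebraMap_eq_smul_one]
  exact le_algebraMap_of_spectrum_le (fun x hx => le_csSup W.finite_real_spectrum.bddAbove hx)
    hW.isSelfAdjoint

lemma le_lamMax_smul_div_smul_one {B : Matrix (Fin n) (Fin n) ℝ} (hB : B.IsHermitian) {c : ℝ}
    (hc : 0 < c) : B ≤ (lamMax (c • B) / c) • 1 := calc
  B = c⁻¹ • c • B := by rw [smul_smul, inv_mul_cancel₀ hc.ne', one_smul]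
  _ ≤ c⁻¹ • lamMax (c • B) • 1 := smul_le_smul_of_nonneg_left
      (le_lamMax_smul_one (hB.smul (IsSelfAdjoint.all c))) (inv_nonneg.mpr hc.le)
  _ = (lamMax (c • B) / c) • 1 := by rw [smul_smul, div_eq_inv_mul]

lemma lamMax_nonneg (hW : 0 ≤ W) : 0 ≤ lamMax W :=
  Real.sSup_nonneg fun _ hx => spectrum_nonneg_of_nonneg hW hx

lemma lamMax_le_trace (hW : 0 ≤ W) : lamMax W ≤ W.trace := by
  have hW' := nonneg_iff_posSemidef.mp hW
  refine Real.sSup_le (fun x hx => ?_) hW'.trace_nonneg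
  rw [hW'.isHermitian.spectrum_real_eq_range_eigenvalues] at hx
  obtain ⟨i, rfl⟩ := hx
  rw [hW'.isHermitian.trace_eq_sum_eigenvalues]
  exact Finset.single_le_sum (fun j _ => hW'.eigenvalues_nonneg j) (Finset.mem_univ i)

end LamMax

open Real in
lemma pow_mul_exp_neg_le {t : ℝ} (ht : 0 ≤ t) (m : ℕ) : t ^ m * exp (-t) ≤ m ^ m * exp (-m) := by
  rcases m.eq_zero_or_pos with rfl | hm
  · simpa using ht
  have hm' : (0 : ℝ) < m := by exact_mod_cast hm
  have hpow : (t / m) ^ m ≤ exp (t - m) := calc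
    (t / m) ^ m ≤ exp (t / m - 1) ^ m :=
        pow_le_pow_left₀ (by positivity) (by linarith [add_one_le_exp (t / m - 1)]) m
    _ = exp (t - m) := by rw [← exp_nat_mul]; congr 1; field_simp
  calc t ^ m * exp (-t) = m ^ m * (t / m) ^ m * exp (-t) := by rw [div_pow]; field_simp
    _ ≤ m ^ m * exp (t - m) * exp (-t) := by gcongr
    _ = m ^ m * exp (-m) := by rw [mul_assoc, ← exp_add]; ring_nf

theorem regularized_volume_element_bound_general {n m : ℕ}
    (V : Matrix (Fin n) (Fin n) ℝ) (hV : V.PosDef)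
    (A : Fin m → Matrix (Fin n) (Fin n) ℝ) (hA : ∀ μ, (A μ).IsSymm) :
    (Real.exp (-(V.det • V⁻¹).trace) * Real.log (1 + V.det ^ m)) *
        Real.sqrt (Matrix.of fun μ ν : Fin m =>
          (1/2) * (V⁻¹ * A μ * V⁻¹ * A ν).trace).det
      ≤ Real.sqrt (Matrix.of fun μ ν : Fin m => (1/2) * (A μ * A ν).trace).det *
          Real.exp (-(V.det • V⁻¹).trace) * (lamMax (V.det • V⁻¹)) ^ m *
          (Real.log (1 + V.det ^ m) / V.det ^ m)
    ∧ (Real.exp (-(V.det • V⁻¹).trace) * Real.log (1 + V.det ^ m)) *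
        Real.sqrt (Matrix.of fun μ ν : Fin m =>
          (1/2) * (V⁻¹ * A μ * V⁻¹ * A ν).trace).det
      ≤ Real.sqrt (Matrix.of fun μ ν : Fin m => (1/2) * (A μ * A ν).trace).det *
          ((m : ℝ) ^ m * Real.exp (-(m : ℝ))) := by
  have hd : 0 < V.det := hV.det_pos
  have hW : (V.det • V⁻¹).PosSemidef := hV.inv.posSemidef.smul hd.le
  set lam := lamMax (V.det • V⁻¹)
  set t := (V.det • V⁻¹).trace
  set L := Real.log (1 + V.det ^ m)
  set sqrtE := √(of fun μ ν : Fin m => (1/2) * (A μ * A ν).trace).det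
  have hg : √(fisherMatrix V⁻¹ A).det ≤ (lam / V.det) ^ m * sqrtE := by
    simpa only [fisherMatrix_one, Fintype.card_fin] using
      sqrt_det_fisherMatrix_le hV.inv.posSemidef.nonneg
        (div_nonneg (lamMax_nonneg hW.nonneg) hd.le)
        (le_lamMax_smul_div_smul_one hV.inv.isHermitian hd)
        fun μ => isHermitian_iff_isSymm.mpr (hA μ)
  have hL : 0 ≤ L := Real.log_nonneg (by linarith [pow_pos hd m])
  have hLd : L / V.det ^ m ≤ 1 := (div_le_one (pow_pos hd m)).mpr <| by
    linarith [Real.log_le_sub_one_of_pos (by positivity : 0 < 1 + V.det ^ m)]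
  have ht : 0 ≤ t := hW.trace_nonneg
  have hbound := mul_le_mul_of_nonneg_left hg (by positivity : 0 ≤ Real.exp (-t) * L)
  refine ⟨hbound.trans_eq (by rw [div_pow]; ring), hbound.trans ?_⟩
  calc Real.exp (-t) * L * ((lam / V.det) ^ m * sqrtE)
      = sqrtE * (lam ^ m * Real.exp (-t) * (L / V.det ^ m)) := by rw [div_pow]; ring
    _ ≤ sqrtE * (t ^ m * Real.exp (-t) * 1) := by
        gcongr
        · exact lamMax_nonneg hW.nonneg
        · exact lamMax_le_trace hW.nonneg
    _ ≤ sqrtE * (m ^ m * Real.exp (-m)) := by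
        rw [mul_one]
        exact mul_le_mul_of_nonneg_left (pow_mul_exp_neg_le ht m) (Real.sqrt_nonneg _)

theorem regularized_volume_element_bound {n m : ℕ} (hm : 1 ≤ m)
    (V : Matrix (Fin n) (Fin n) ℝ) (hVs : V.IsSymm) (hV : V.PosDef)
    (A : Fin m → Matrix (Fin n) (Fin n) ℝ) (hA : ∀ μ, (A μ).IsSymm) :
    (Real.exp (-(V.det • V⁻¹).trace) * Real.log (1 + V.det ^ m)) *
        Real.sqrt (Matrix.of fun μ ν : Fin m =>
          (1/2) * (V⁻¹ * A μ * V⁻¹ * A ν).trace).det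
      ≤ Real.sqrt (Matrix.of fun μ ν : Fin m => (1/2) * (A μ * A ν).trace).det *
          Real.exp (-(V.det • V⁻¹).trace) * (lamMax (V.det • V⁻¹)) ^ m *
          (Real.log (1 + V.det ^ m) / V.det ^ m)
    ∧ (Real.exp (-(V.det • V⁻¹).trace) * Real.log (1 + V.det ^ m)) *
        Real.sqrt (Matrix.of fun μ ν : Fin m =>
          (1/2) * (V⁻¹ * A μ * V⁻¹ * A ν).trace).det
      ≤ Real.sqrt (Matrix.of fun μ ν : Fin m => (1/2) * (A μ * A ν).trace).det *
          ((m : ℝ) ^ m * Real.exp (-(m : ℝ))) :=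
  regularized_volume_element_bound_general V hV A hA
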